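/- arXiv:2210.07793 — 6 statements merged into one kernel-verified Lean document; each statement's English description precedes it below -/
import Mathlib

section
/- The Good Toy Auction (GTA) is SCP: for every valuation vector v ∈ ℕ^n, every coalition C of bidders, every deviating bid vector in which bidders outside C bid truthfully, every finite set of miner fake bids, and every allocation, the joint utility of the miner and C does not exceed its value under truthful bidding by all bidders, no fake bids, and GTA's intended allocation. -/
/-- The Good Toy Auction's intended allocation rule: allocate every bid of at least `1`. -/
def gtaAlloc {n : ℕ} (b : Fin n → ℕ) (i : Fin n) : Bool :=
  decide (1 ≤ b i)

/-- The Good Toy Auction's payment rule `pᵢ(b) = xᵢ(b)`: every allocated bid pays `1`,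
unallocated bids pay `0`. -/
def gtaPay {n : ℕ} (b : Fin n → ℕ) (i : Fin n) : ℝ :=
  if gtaAlloc b i then 1 else 0

/-- The miner's utility under GTA when the real bids are `b` and the miner injects the
fake bids `f` (no fees are burnt; the miner pays the fee of each of its own fake bids). -/
def gtaMinerUtil {n m : ℕ} (b : Fin n → ℕ) (f : Fin m → ℕ) : ℝ :=
  (∑ i : Fin (n + m), gtaPay (Fin.append b f) i)
    - ∑ j : Fin m, gtaPay (Fin.append b f) (Fin.natAdd n j)

/-- Joint utility of the miner and the coalition `C` of bidders with values `v`, when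
the submitted real bids are `b`, the fake bids are `f`, and the miner chooses the
allocation `α` of the full bid vector. -/
def gtaJointUtil {n m : ℕ} (C : Finset (Fin n)) (b : Fin n → ℕ) (f : Fin m → ℕ)
    (α : Fin (n + m) → Bool) (v : Fin n → ℕ) : ℝ :=
  gtaMinerUtil b f
    + ∑ i ∈ C, ((v i : ℝ) * (if α (Fin.castAdd m i) then 1 else 0)
        - gtaPay (Fin.append b f) (Fin.castAdd m i))

/-- Joint utility of the miner and the coalition `C` under truthful bidding by all
bidders, no fake bids, and GTA's intended allocation. -/
def gtaTruthfulJoint {n : ℕ} (C : Finset (Fin n)) (v : Fin n → ℕ) : ℝ :=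
  (∑ i : Fin n, gtaPay v i)
    + ∑ i ∈ C, ((v i : ℝ) * (if gtaAlloc v i then 1 else 0) - gtaPay v i)

/-- The Good Toy Auction is SCP: for every valuation vector, every
coalition `C`, every deviating bid vector in which bidders outside `C` bid truthfully,
every finite set of miner fake bids and every allocation, the joint utility of the miner
and `C` does not exceed its value under truthful bidding, no fake bids and GTA's
intended allocation. -/
theorem gta_scp (n : ℕ) (v : Fin n → ℕ) (C : Finset (Fin n)) (b : Fin n → ℕ)
    (hb : ∀ i ∉ C, b i = v i) (m : ℕ) (f : Fin m → ℕ) (α : Fin (n + m) → Bool) :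
    gtaJointUtil C b f α v ≤ gtaTruthfulJoint C v := by
  have happ : ∀ i : Fin n, gtaPay (Fin.append b f) (Fin.castAdd m i) = gtaPay b i := by
    intro i; simp [gtaPay, gtaAlloc, Fin.append_left]
  have hminer : gtaMinerUtil b f = ∑ i : Fin n, gtaPay b i := by
    simp [gtaMinerUtil, Fin.sum_univ_add, happ]
  have hL : gtaJointUtil C b f α v
      = ∑ i ∈ Cᶜ, gtaPay b i
        + ∑ i ∈ C, (v i : ℝ) * (if α (Fin.castAdd m i) then 1 else 0) := by
    rw [gtaJointUtil, hminer, ← Finset.sum_compl_add_sum C (fun i => gtaPay b i),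
      add_assoc, ← Finset.sum_add_distrib]
    congr 1
    exact Finset.sum_congr rfl fun i _ => by rw [happ]; ring
  have hR : gtaTruthfulJoint C v
      = ∑ i ∈ Cᶜ, gtaPay v i
        + ∑ i ∈ C, (v i : ℝ) * (if gtaAlloc v i then 1 else 0) := by
    rw [gtaTruthfulJoint, ← Finset.sum_compl_add_sum C (fun i => gtaPay v i),
      add_assoc, ← Finset.sum_add_distrib]
    congr 1
    exact Finset.sum_congr rfl fun i _ => by ring
  rw [hL, hR]
  refine add_le_add (le_of_eq (Finset.sum_congr rfl fun i hi => ?_))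
    (Finset.sum_le_sum fun i _ => ?_)
  · unfold gtaPay gtaAlloc
    rw [hb i (Finset.mem_compl.mp hi)]
  · by_cases hv : v i = 0
    · simp [hv]
    · have h1 : (1:ℕ) ≤ v i := Nat.one_le_iff_ne_zero.mpr hv
      simp only [gtaAlloc, h1, decide_true, if_true, mul_one]
      split
      · simp
      · simp
end

section
/- Let M be an EPIR transaction fee mechanism whose payment and burning rules are separable (for each i, the payment p_i and burn β_i of an allocated bid b_i depend only on b_i, and an unallocated bid pays and burns 0), and whose intended allocation rule is revenue-maximizing for the miner: for every bid vector b, the intended allocation maximizes ∑_i α_i·(p_i(b_i) − β_i(b_i)) over all feasible allocations α (at most B bids allocated). Then M is MMIC: no miner can strictly increase its utility by deviating from the intended allocation or by adding fake bids of its own. -/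
open Finset

def minerRevenue (P Q : ℕ → ℝ → ℝ) {n : ℕ} (b : Fin n → ℝ) (α : Fin n → Bool) : ℝ :=
  ∑ i : Fin n, if α i then P i (b i) - Q i (b i) else 0

lemma card_filter_comp_le_of_injective {ι κ : Type*} [Fintype ι] [Fintype κ]
    (α : κ → Bool) {g : ι → κ} (hg : Function.Injective g) :
    #(univ.filter fun i => α (g i) = true) ≤ #(univ.filter fun k => α k = true) :=
  card_le_card_of_injOn g (fun i hi => by simpa using hi) hg.injOn

lemma minerRevenue_append (P Q : ℕ → ℝ → ℝ) {n m : ℕ} (b : Fin n → ℝ) (f : Fin m → ℝ)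
    (α : Fin (n + m) → Bool) :
    minerRevenue P Q (Fin.append b f) α = minerRevenue P Q b (α ∘ Fin.castAdd m) +
      ∑ j : Fin m, if α (Fin.natAdd n j) then P (n + j) (f j) - Q (n + j) (f j) else 0 := by
  simp [minerRevenue, Fin.sum_univ_add]

lemma sum_ite_sub_sub_sum_ite_nonpos {ι : Type*} (s : Finset ι) (c : ι → Bool)
    (p q : ι → ℝ) (hq : ∀ i ∈ s, 0 ≤ q i) :
    (∑ i ∈ s, if c i then p i - q i else 0) - ∑ i ∈ s, (if c i then p i else 0) ≤ 0 := by
  rw [← sum_sub_distrib]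
  refine sum_nonpos fun i hi => ?_
  cases c i <;> simp [hq i hi]

theorem separable_revenue_maximizing_implies_mmic_general
    (B : ℕ∞)
    (x : ∀ n : ℕ, (Fin n → ℝ) → Fin n → Bool)
    (P Q : ℕ → ℝ → ℝ)
    (hQ_nonneg : ∀ (i : ℕ) (t : ℝ), 0 ≤ t → 0 ≤ Q i t)
    (hRevMax : ∀ (n : ℕ) (b : Fin n → ℝ), (∀ i, 0 ≤ b i) →
      ∀ α : Fin n → Bool,
        (((Finset.univ.filter fun i => α i = true).card : ℕ∞)) ≤ B →
        (∑ i : Fin n, if α i then P (i : ℕ) (b i) - Q (i : ℕ) (b i) else 0)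
          ≤ ∑ i : Fin n, if x n b i then P (i : ℕ) (b i) - Q (i : ℕ) (b i) else 0) :
    -- MMIC: the miner's utility from any feasible allocation `α` of the real bids `b`
    -- together with any fake bids `f` (it pays the fees of its own allocated fake bids)
    -- is at most its utility from the intended allocation with no fake bids.
    ∀ (n : ℕ) (b : Fin n → ℝ), (∀ i, 0 ≤ b i) →
    ∀ (m : ℕ) (f : Fin m → ℝ), (∀ j, 0 ≤ f j) →
    ∀ α : Fin (n + m) → Bool,
      (((Finset.univ.filter fun i => α i = true).card : ℕ∞)) ≤ B →
      ((∑ i : Fin (n + m),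
          if α i then P (i : ℕ) (Fin.append b f i) - Q (i : ℕ) (Fin.append b f i) else 0)
        - ∑ j : Fin m,
            (if α (Fin.natAdd n j) then P ((Fin.natAdd n j : Fin (n + m)) : ℕ) (f j) else 0))
      ≤ ∑ i : Fin n, if x n b i then P (i : ℕ) (b i) - Q (i : ℕ) (b i) else 0 := by
  intro n b hb m f hf α hα
  have hfeasible : ((#(univ.filter fun i => (α ∘ Fin.castAdd m) i = true) : ℕ) : ℕ∞) ≤ B :=
    le_trans (by exact_mod_cast card_filter_comp_le_of_injective α (Fin.castAdd_injective n m)) hα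
  have hreal := hRevMax n b hb _ hfeasible
  -- Each allocated fake bid contributes `P - Q` to the revenue but costs the miner `P`.
  have hfake := sum_ite_sub_sub_sum_ite_nonpos univ (fun j => α (Fin.natAdd n j))
    (fun j => P (n + j) (f j)) (fun j => Q (n + j) (f j)) fun j _ => hQ_nonneg _ _ (hf j)
  have hsplit := minerRevenue_append P Q b f α
  simp only [minerRevenue, Function.comp_apply, Fin.val_natAdd] at hsplit hreal hfake ⊢
  linarith

/-- Consider an EPIR TFM with block size `B` whose payment and burning
rules are separable: bidder `i`, when allocated, pays `P i (b i)` and burns `Q i (b i)`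
(both depending only on its own bid), and pays and burns `0` when unallocated.  If the
intended allocation rule `x` is revenue-maximizing for the miner — for every bid vector
it maximizes `∑ i, αᵢ ⬝ (P i (b i) − Q i (b i))` over all feasible allocations `α`
(allocating at most `B` bids) — then the mechanism is MMIC: the miner cannot strictly
increase its utility by deviating from the intended allocation or by injecting fake bids
of its own. -/
theorem separable_revenue_maximizing_implies_mmic
    (B : ℕ∞)
    (x : ∀ n : ℕ, (Fin n → ℝ) → Fin n → Bool)
    (P Q : ℕ → ℝ → ℝ)
    (hP_nonneg : ∀ (i : ℕ) (t : ℝ), 0 ≤ t → 0 ≤ P i t)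
    (hQ_nonneg : ∀ (i : ℕ) (t : ℝ), 0 ≤ t → 0 ≤ Q i t)
    (hx_feasible : ∀ (n : ℕ) (b : Fin n → ℝ),
      (((Finset.univ.filter fun i => x n b i = true).card : ℕ∞)) ≤ B)
    (hEPIR : ∀ (n : ℕ) (b : Fin n → ℝ), (∀ i, 0 ≤ b i) →
      ∀ i : Fin n, x n b i = true → P (i : ℕ) (b i) ≤ b i)
    (hRevMax : ∀ (n : ℕ) (b : Fin n → ℝ), (∀ i, 0 ≤ b i) →
      ∀ α : Fin n → Bool,
        (((Finset.univ.filter fun i => α i = true).card : ℕ∞)) ≤ B →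
        (∑ i : Fin n, if α i then P (i : ℕ) (b i) - Q (i : ℕ) (b i) else 0)
          ≤ ∑ i : Fin n, if x n b i then P (i : ℕ) (b i) - Q (i : ℕ) (b i) else 0) :
    -- MMIC: the miner's utility from any feasible allocation `α` of the real bids `b`
    -- together with any fake bids `f` (it pays the fees of its own allocated fake bids)
    -- is at most its utility from the intended allocation with no fake bids.
    ∀ (n : ℕ) (b : Fin n → ℝ), (∀ i, 0 ≤ b i) →
    ∀ (m : ℕ) (f : Fin m → ℝ), (∀ j, 0 ≤ f j) →
    ∀ α : Fin (n + m) → Bool,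
      (((Finset.univ.filter fun i => α i = true).card : ℕ∞)) ≤ B →
      ((∑ i : Fin (n + m),
          if α i then P (i : ℕ) (Fin.append b f i) - Q (i : ℕ) (Fin.append b f i) else 0)
        - ∑ j : Fin m,
            (if α (Fin.natAdd n j) then P ((Fin.natAdd n j : Fin (n + m)) : ℕ) (f j) else 0))
      ≤ ∑ i : Fin n, if x n b i then P (i : ℕ) (b i) - Q (i : ℕ) (b i) else 0 :=
  separable_revenue_maximizing_implies_mmic_general B x P Q hQ_nonneg hRevMax
end

section
/- Every discrete-bid transaction fee mechanism (bids and values in ℕ, rules defined for bid vectors of every finite length) that is EPIR, EPBB, DSIC, OCA-proof and 1-SCP satisfies the following revenue bound: for every bid vector b, the miner's revenue under the intended allocation, ∑_i (p_i(b) − β_i(b)), is at most 5k, where k is the number of allocated bids. -/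
open MeasureTheory

/-- A discrete-bid transaction fee mechanism with block size `B` (possibly infinite):
bids and values lie in `ℕ`, and the allocation, payment and burning rules are defined
for bid vectors of every finite length. -/
structure DTFM (B : ℕ∞) where
  alloc : ∀ n : ℕ, (Fin n → ℕ) → Fin n → Bool
  pay : ∀ n : ℕ, (Fin n → ℕ) → Fin n → ℝ
  burn : ∀ n : ℕ, (Fin n → ℕ) → Fin n → ℝ
  pay_nonneg : ∀ n b i, 0 ≤ pay n b i
  burn_nonneg : ∀ n b i, 0 ≤ burn n b i
  alloc_card_le : ∀ n b,
    (((Finset.univ.filter fun i => alloc n b i = true).card : ℕ∞)) ≤ B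

namespace DTFM

variable {B : ℕ∞} (M : DTFM B)

/-- Number of bids allocated by the intended allocation rule. -/
def allocCount (n : ℕ) (b : Fin n → ℕ) : ℕ :=
  (Finset.univ.filter fun i => M.alloc n b i = true).card

/-- Miner utility when the real bids are `b` and the miner injects fake bids `f`:
it collects all payments net of burn, but pays the fees of its own fake bids. -/
def minerUtil {n m : ℕ} (b : Fin n → ℕ) (f : Fin m → ℕ) : ℝ :=
  (∑ i : Fin (n + m),
      (M.pay (n + m) (Fin.append b f) i - M.burn (n + m) (Fin.append b f) i))
    - ∑ j : Fin m, M.pay (n + m) (Fin.append b f) (Fin.natAdd n j)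

/-- Joint utility of the miner and the coalition `C` of (real) bidders with values `v`,
when the submitted real bids are `b`, the fake bids are `f`, and the miner chooses the
allocation `α` of the full bid vector. -/
def jointUtil {n m : ℕ} (C : Finset (Fin n)) (b : Fin n → ℕ) (f : Fin m → ℕ)
    (α : Fin (n + m) → Bool) (v : Fin n → ℕ) : ℝ :=
  M.minerUtil b f
    + ∑ i ∈ C, ((v i : ℝ) * (if α (Fin.castAdd m i) then 1 else 0)
        - M.pay (n + m) (Fin.append b f) (Fin.castAdd m i))

/-- Joint utility of the miner and the coalition `C` under truthful bidding,
no fake bids, and the intended allocation. -/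
def truthfulJoint {n : ℕ} (C : Finset (Fin n)) (v : Fin n → ℕ) : ℝ :=
  (∑ i : Fin n, (M.pay n v i - M.burn n v i))
    + ∑ i ∈ C, ((v i : ℝ) * (if M.alloc n v i then 1 else 0) - M.pay n v i)

/-- The set of bidders allocated under truthful bidding and the intended allocation. -/
def winners (n : ℕ) (v : Fin n → ℕ) : Finset (Fin n) :=
  Finset.univ.filter fun i => M.alloc n v i = true

/-- Ex-post individual rationality: under the intended allocation, every unallocated
bidder pays `0`, and every allocated bidder pays at most its bid. -/
def EPIR : Prop :=
  ∀ (n : ℕ) (b : Fin n → ℕ) (i : Fin n),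
    (M.alloc n b i = false → M.pay n b i = 0) ∧
    (M.alloc n b i = true → M.pay n b i ≤ (b i : ℝ))

/-- Ex-post budget balance: `0 ≤ βᵢ(b) ≤ pᵢ(b)` for all `i` and `b`. -/
def EPBB : Prop :=
  ∀ (n : ℕ) (b : Fin n → ℕ) (i : Fin n), M.burn n b i ≤ M.pay n b i

/-- Dominant-strategy incentive compatibility: under the intended allocation, truthful
bidding is a dominant strategy for every bidder. -/
def DSIC : Prop :=
  ∀ (n : ℕ) (b : Fin n → ℕ) (i : Fin n) (v : ℕ),
    (v : ℝ) * (if M.alloc n b i then 1 else 0) - M.pay n b i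
      ≤ (v : ℝ) * (if M.alloc n (Function.update b i v) i then 1 else 0)
          - M.pay n (Function.update b i v) i

/-- `1`-side-contract-proofness: no collusion of the miner with a single bidder (all
other bidders truthful, the miner adding arbitrary fake bids and choosing an arbitrary
feasible allocation) can increase their joint utility above its value under truthful
bidding, no fake bids and the intended allocation. -/
def OneSCP : Prop :=
  ∀ (n : ℕ) (v : Fin n → ℕ) (i : Fin n) (bi : ℕ)
    (m : ℕ) (f : Fin m → ℕ) (α : Fin (n + m) → Bool),
    (((Finset.univ.filter fun j => α j = true).card : ℕ∞)) ≤ B →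
    M.jointUtil {i} (Function.update v i bi) f α v ≤ M.truthfulJoint {i} v

/-- OCA-proofness: no deviation (an arbitrary set `S` of deviating bidders, arbitrary
fake bids and an arbitrary feasible allocation chosen by the miner) gives the miner and
the deviating bidders a joint utility exceeding the joint utility of the miner together
with the bidders allocated under truthful bidding and the intended allocation. -/
def OCAProof : Prop :=
  ∀ (n : ℕ) (v : Fin n → ℕ) (S : Finset (Fin n)) (b : Fin n → ℕ), (∀ i ∉ S, b i = v i) →
  ∀ (m : ℕ) (f : Fin m → ℕ) (α : Fin (n + m) → Bool),
    (((Finset.univ.filter fun i => α i = true).card : ℕ∞)) ≤ B →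
    M.jointUtil S b f α v ≤ M.truthfulJoint (M.winners n v) v

end DTFM


/-- Auxiliary: if the block size is at least `1`, then under `1`-SCP and EPIR every
bidder that is not allocated by the intended allocation must have value `0`
(otherwise the miner could simply allocate that bidder, strictly increasing the joint
utility of the miner and that bidder). -/
lemma DTFM.loser_zero {B : ℕ∞} (M : DTFM B) (hSCP : M.OneSCP) (hEPIR : M.EPIR)
    (hB : (1 : ℕ∞) ≤ B) {n : ℕ} (v : Fin n → ℕ) (i : Fin n)
    (h : M.alloc n v i = false) : v i = 0 := by
  classical
  set α : Fin (n + 0) → Bool := fun j => decide (j = Fin.castAdd 0 i) with hα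
  have hcard : (((Finset.univ.filter fun j => α j = true).card : ℕ∞)) ≤ B := by
    have : (Finset.univ.filter fun j => α j = true) = {Fin.castAdd 0 i} := by
      ext j; simp [hα]
    rw [this]; simpa using hB
  have key := hSCP n v i (v i) 0 Fin.elim0 α hcard
  have happ : Fin.append v (Fin.elim0 : Fin 0 → ℕ) = v := by
    funext j; simp [Fin.append_elim0]
  simp only [DTFM.jointUtil, DTFM.minerUtil, DTFM.truthfulJoint,
    Function.update_eq_self, happ, Finset.sum_singleton] at key
  have hαi : α (Fin.castAdd 0 i) = true := by simp [hα]
  rw [hαi, h] at key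
  have hp0 : M.pay n v i = 0 := (hEPIR n v i).1 h
  have hsum : (∑ j : Fin (n + 0), (M.pay (n + 0) v j - M.burn (n + 0) v j))
      = ∑ j : Fin n, (M.pay n v j - M.burn n v j) := rfl
  have hpc : M.pay (n + 0) v (Fin.castAdd 0 i) = M.pay n v i := rfl
  rw [hsum, hpc, hp0] at key
  simp at key
  exact key

/-- Auxiliary: if the block size is at least `1`, then under `1`-SCP, EPIR and DSIC
every allocated bidder pays at most `1`: bidding `1` would still win (by
`DTFM.loser_zero`) and would cost at most `1` by EPIR, so by DSIC the truthful payment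
is at most `1`. -/
lemma DTFM.pay_le_one {B : ℕ∞} (M : DTFM B) (hSCP : M.OneSCP) (hEPIR : M.EPIR)
    (hDSIC : M.DSIC) (hB : (1 : ℕ∞) ≤ B) {n : ℕ} (b : Fin n → ℕ) (i : Fin n)
    (h : M.alloc n b i = true) : M.pay n b i ≤ 1 := by
  by_cases h0 : b i = 0
  · have hle := (hEPIR n b i).2 h
    rw [h0] at hle
    have := M.pay_nonneg n b i
    norm_num at hle ⊢
    linarith
  · set b' := Function.update b i 1 with hb'
    have hw : M.alloc n b' i = true := by
      by_contra hw'
      have hz := M.loser_zero hSCP hEPIR hB b' i (by simpa using hw')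
      rw [hb'] at hz
      simp [Function.update_self] at hz
    have hd := hDSIC n b' i (b i)
    have hub : Function.update b' i (b i) = b := by
      rw [hb', Function.update_idem, Function.update_eq_self]
    rw [hub, hw, h] at hd
    have hp1 : M.pay n b' i ≤ 1 := by
      have := (hEPIR n b' i).2 hw
      rw [hb'] at this
      simpa using this
    simp only [if_true] at hd
    linarith

/-- Every discrete-bid TFM that is EPIR, EPBB, DSIC, OCA-proof and
`1`-SCP has revenue at most `5k` on every bid vector, where `k` is the number of
allocated bids. -/
theorem discrete_scp_tfm_revenue_le_five_k (B : ℕ∞) (M : DTFM B)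
    (hEPIR : M.EPIR) (hEPBB : M.EPBB) (hDSIC : M.DSIC)
    (hOCA : M.OCAProof) (hSCP : M.OneSCP) :
    ∀ (n : ℕ) (b : Fin n → ℕ),
      (∑ i : Fin n, (M.pay n b i - M.burn n b i)) ≤ 5 * (M.allocCount n b : ℝ) := by
  classical
  intro n b
  have hk0 : (0 : ℝ) ≤ (M.allocCount n b : ℝ) := Nat.cast_nonneg _
  rcases eq_or_ne B 0 with hB | hB
  · -- block size 0 : nothing is ever allocated and all payments are 0
    have hall : ∀ i, M.alloc n b i = false := by
      intro i
      by_contra hi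
      have hi' : M.alloc n b i = true := by simpa using hi
      have hle : (((Finset.univ.filter fun j => M.alloc n b j = true).card : ℕ∞)) ≤ 0 :=
        le_trans (M.alloc_card_le n b) (le_of_eq hB)
      rw [nonpos_iff_eq_zero, Nat.cast_eq_zero, Finset.card_eq_zero] at hle
      have : i ∈ Finset.univ.filter fun j => M.alloc n b j = true := by simp [hi']
      rw [hle] at this
      simp at this
    have hterm : ∀ i : Fin n, M.pay n b i - M.burn n b i ≤ 0 := by
      intro i
      have h1 := (hEPIR n b i).1 (hall i)
      have h2 := M.burn_nonneg n b i
      linarith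
    calc (∑ i : Fin n, (M.pay n b i - M.burn n b i)) ≤ ∑ i : Fin n, (0 : ℝ) :=
          Finset.sum_le_sum fun i _ => hterm i
      _ = 0 := by simp
      _ ≤ 5 * (M.allocCount n b : ℝ) := by linarith
  · have hB1 : (1 : ℕ∞) ≤ B := ENat.one_le_iff_ne_zero.2 hB
    have hterm : ∀ i : Fin n, M.pay n b i - M.burn n b i ≤
        (if M.alloc n b i then (1 : ℝ) else 0) := by
      intro i
      have h2 := M.burn_nonneg n b i
      cases hi : M.alloc n b i with
      | false =>
          have h1 := (hEPIR n b i).1 hi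
          simp only [Bool.false_eq_true, if_false]
          linarith
      | true =>
          have h1 := M.pay_le_one hSCP hEPIR hDSIC hB1 b i hi
          norm_num
          linarith
    calc (∑ i : Fin n, (M.pay n b i - M.burn n b i))
        ≤ ∑ i : Fin n, (if M.alloc n b i then (1 : ℝ) else 0) :=
          Finset.sum_le_sum fun i _ => hterm i
      _ = (M.allocCount n b : ℝ) := by
          simp [DTFM.allocCount, Finset.sum_boole]
      _ ≤ 5 * (M.allocCount n b : ℝ) := by linarith
end

section
/- Every discrete-bid transaction fee mechanism (bids and values in ℕ) that is EPIR, EPBB, DSIC, 1-SCP, and has separable payment and burning rules satisfies: for every bid vector b, the miner's revenue under the intended allocation, ∑_i (p_i(b) − β_i(b)), is at most k, the number of allocated bids. -/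
open MeasureTheory

namespace DTFM

variable {B : ℕ∞} (M : DTFM B)

/-- A rule is separable if its `i`-th output depends only on the `i`-th bid. -/
def SeparableRule (f : ∀ n : ℕ, (Fin n → ℕ) → Fin n → ℝ) : Prop :=
  ∀ (n : ℕ) (b b' : Fin n → ℕ) (i : Fin n), b i = b' i → f n b i = f n b' i

end DTFM


/-- Key single-bidder bound: every allocated bidder contributes at most `1` to
the miner revenue. Proved by induction on the bid of the allocated bidder. -/
lemma DTFM.alloc_pay_sub_burn_le_one {B : ℕ∞} (M : DTFM B)
    (hEPIR : M.EPIR) (hEPBB : M.EPBB) (hDSIC : M.DSIC) (hSCP : M.OneSCP)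
    (hsep_pay : DTFM.SeparableRule M.pay) (hsep_burn : DTFM.SeparableRule M.burn) :
    ∀ (t n : ℕ) (b : Fin n → ℕ) (i : Fin n), b i = t → M.alloc n b i = true →
      M.pay n b i - M.burn n b i ≤ 1 := by
  intro t
  induction t with
  | zero =>
    intro n b i hbi halloc
    have h1 : M.pay n b i ≤ (b i : ℝ) := (hEPIR n b i).2 halloc
    have h2 : 0 ≤ M.burn n b i := M.burn_nonneg n b i
    rw [hbi] at h1
    push_cast at h1
    linarith
  | succ t ih =>
    intro n b i hbi halloc
    set v : Fin n → ℕ := Function.update b i t with hv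
    have hvi : v i = t := Function.update_self i t b
    have hvj : ∀ j : Fin n, j ≠ i → v j = b j := fun j hj => Function.update_of_ne hj t b
    have hupd : Function.update v i (b i) = b := by
      rw [hv, Function.update_idem, Function.update_eq_self]
    -- feasibility of allocating only bidder i
    have hB : (1 : ℕ∞) ≤ B := by
      refine le_trans ?_ (M.alloc_card_le n b)
      have h1 : 1 ≤ (Finset.univ.filter fun j => M.alloc n b j = true).card :=
        Finset.card_pos.mpr ⟨i, by simp [halloc]⟩
      exact_mod_cast h1
    set α : Fin (n + 0) → Bool := fun j => decide ((j : ℕ) = (i : ℕ)) with hα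
    have hαcard : (((Finset.univ.filter fun j => α j = true).card : ℕ∞)) ≤ B := by
      have : (Finset.univ.filter fun j : Fin (n + 0) => α j = true) = {i} := by
        ext j
        simp [hα, Fin.ext_iff]
      rw [this]
      simpa using hB
    have h := hSCP n v i (b i) 0 Fin.elim0 α hαcard
    rw [hupd] at h
    have happ : Fin.append b (Fin.elim0 : Fin 0 → ℕ) = b := Fin.append_elim0 b
    simp only [DTFM.jointUtil, DTFM.minerUtil, DTFM.truthfulJoint,
      happ, Finset.sum_singleton] at h
    have e0 : (∑ j : Fin 0, M.pay (n + 0) b (Fin.natAdd n j)) = 0 := by simp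
    rw [e0] at h
    have e1 : (∑ j : Fin (n + 0), (M.pay (n + 0) b j - M.burn (n + 0) b j))
        = ∑ j : Fin n, (M.pay n b j - M.burn n b j) := rfl
    rw [e1] at h
    have e2 : M.pay (n + 0) b (Fin.castAdd 0 i) = M.pay n b i := rfl
    rw [e2] at h
    have e3 : α (Fin.castAdd 0 i) = true := by simp [hα]
    rw [e3] at h
    rw [hvi] at h
    -- separability: the revenue at `v` versus at `b`
    have hsum : (∑ j : Fin n, (M.pay n v j - M.burn n v j))
        = (∑ j : Fin n, (M.pay n b j - M.burn n b j))
          - (M.pay n b i - M.burn n b i) + (M.pay n v i - M.burn n v i) := by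
      have hkey : ∀ j ∈ Finset.univ.erase i,
          (M.pay n v j - M.burn n v j) = (M.pay n b j - M.burn n b j) := by
        intro j hj
        have hne : j ≠ i := Finset.ne_of_mem_erase hj
        rw [hsep_pay n v b j (hvj j hne), hsep_burn n v b j (hvj j hne)]
      have hA := Finset.sum_erase_add Finset.univ
        (fun j => M.pay n v j - M.burn n v j) (Finset.mem_univ i)
      have hBb := Finset.sum_erase_add Finset.univ
        (fun j => M.pay n b j - M.burn n b j) (Finset.mem_univ i)
      have hC := Finset.sum_congr rfl hkey
      rw [← hA, ← hBb, hC]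
      ring
    rw [hsum] at h
    have hpv0 : 0 ≤ M.pay n v i := M.pay_nonneg n v i
    have hbv0 : 0 ≤ M.burn n v i := M.burn_nonneg n v i
    by_cases hav : M.alloc n v i = true
    · -- still allocated at the lower bid: use DSIC and the inductive hypothesis
      have hIH : M.pay n v i - M.burn n v i ≤ 1 := ih n v i hvi hav
      have hD := hDSIC n v i (b i)
      rw [hupd, hav, halloc] at hD
      simp only [if_true] at hD
      rw [hav] at h
      simp only [if_true] at h
      linarith
    · -- no longer allocated: the burn at `b` must be large
      rw [Bool.not_eq_true] at hav
      rw [hav] at h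
      simp only [Bool.false_eq_true, if_false, if_true, mul_one, mul_zero] at h
      have hpb : M.pay n b i ≤ (b i : ℝ) := (hEPIR n b i).2 halloc
      rw [hbi] at hpb
      push_cast at hpb
      linarith

/-- Every discrete-bid TFM that is EPIR, EPBB, DSIC, `1`-SCP and has
separable payment and burning rules has revenue at most `k` on every bid vector, where
`k` is the number of allocated bids. -/
theorem discrete_separable_scp_tfm_revenue_le_k (B : ℕ∞) (M : DTFM B)
    (hEPIR : M.EPIR) (hEPBB : M.EPBB) (hDSIC : M.DSIC) (hSCP : M.OneSCP)
    (hsep_pay : DTFM.SeparableRule M.pay) (hsep_burn : DTFM.SeparableRule M.burn) :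
    ∀ (n : ℕ) (b : Fin n → ℕ),
      (∑ i : Fin n, (M.pay n b i - M.burn n b i)) ≤ (M.allocCount n b : ℝ) := by
  intro n b
  have hone := M.alloc_pay_sub_burn_le_one hEPIR hEPBB hDSIC hSCP hsep_pay hsep_burn
  have hbound : ∀ i : Fin n, M.pay n b i - M.burn n b i
      ≤ (if M.alloc n b i = true then (1:ℝ) else 0) := by
    intro i
    by_cases hai : M.alloc n b i = true
    · rw [if_pos hai]
      exact hone (b i) n b i rfl hai
    · rw [if_neg hai]
      rw [Bool.not_eq_true] at hai
      have h1 : M.pay n b i = 0 := (hEPIR n b i).1 hai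
      have h2 : 0 ≤ M.burn n b i := M.burn_nonneg n b i
      linarith
  calc (∑ i : Fin n, (M.pay n b i - M.burn n b i))
      ≤ ∑ i : Fin n, (if M.alloc n b i = true then (1:ℝ) else 0) :=
        Finset.sum_le_sum fun i _ => hbound i
    _ = (M.allocCount n b : ℝ) := by
        rw [DTFM.allocCount]
        simp [Finset.sum_boole]
end

section
/- Let values of n bidders be i.i.d. from a continuous distribution F on [0, H], and suppose s : [0,H] → ℝ is a non-decreasing function with 0 ≤ s(v) ≤ v for all v that is a symmetric Bayes–Nash equilibrium bidding strategy of the pay-as-bid greedy auction (PABGA) with block size B. Then the shading auction — the direct mechanism that allocates the B highest reported values and charges each allocated bidder i the payment s(v_i), with no burning — is BIC, MMIC, OCA-proof, and efficient (it always allocates a set of B bidders with the highest values). -/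
open MeasureTheory

/-- The rank of bid `i` in the bid vector `b`: the number of bids that beat it
(higher bid, or equal bid with smaller index, as deterministic tie-breaking). -/
noncomputable def rank {n : ℕ} (b : Fin n → ℝ) (i : Fin n) : ℕ :=
  (Finset.univ.filter fun j => b i < b j ∨ (b j = b i ∧ j < i)).card

/-- The greedy allocation of the `B` highest bids. -/
noncomputable def topAlloc (B : ℕ) {n : ℕ} (b : Fin n → ℝ) (i : Fin n) : Bool :=
  decide (rank b i < B)

/-- Utility of bidder `i` with value `t` in the pay-as-bid greedy auction with block
size `B`, under bids `b`: an allocated bidder pays its own bid. -/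
noncomputable def pabgaUtil (B : ℕ) {n : ℕ} (b : Fin n → ℝ) (i : Fin n) (t : ℝ) : ℝ :=
  if topAlloc B b i then t - b i else 0

/-- Utility of bidder `i` with value `t` in the shading auction with strategy `s`, under
reports `b`: the `B` highest reports are allocated and an allocated bidder `i` pays
`s (b i)`, with no burning. -/
noncomputable def shadeUtil (s : ℝ → ℝ) (B : ℕ) {n : ℕ} (b : Fin n → ℝ) (i : Fin n)
    (t : ℝ) : ℝ :=
  if topAlloc B b i then t - s (b i) else 0

/-- The product measure of `n` i.i.d. draws from `μ`. -/
noncomputable def iidPi (μ : Measure ℝ) (n : ℕ) : Measure (Fin n → ℝ) :=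
  Measure.pi fun _ : Fin n => μ

/-!
Efficiency, MMIC and OCA-proofness hold profile by profile. The allocation takes the `B` highest
reports, and since `s` is monotone, non-negative and below the value, no allocation of at most `B`
bids collects more shaded payments, or more welfare, than the top `B` reports.

For BIC, compare the shading auction with the pay-as-bid auction in which the others bid `s (vⱼ)`.
Winning with the report `r` implies winning with every bid above `s r`, so by the equilibrium
property the interim utility of reporting `r` is at most that of bidding `s t`. Conversely, winning
with the bid `s t` implies winning with the report `t` unless another bidder has value exactly `t`,
or a value above `t` but the same bid `s t`. Both events are null, the first by continuity of the
distribution; for the second, a bidder with value `x > s x` who ties with positive probability at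
the bid `s x` would gain by overbidding slightly, since this wins the whole tie.
-/

open MeasureTheory Finset Function

section Ranking

variable {n : ℕ}

def Beats (b : Fin n → ℝ) (j i : Fin n) : Prop :=
  b i < b j ∨ (b j = b i ∧ j < i)

noncomputable instance (b : Fin n → ℝ) : DecidableRel (Beats b) :=
  fun j i => inferInstanceAs (Decidable (b i < b j ∨ (b j = b i ∧ j < i)))

theorem rank_eq_card_beats (b : Fin n → ℝ) (i : Fin n) : rank b i = #{j | Beats b j i} := rfl

theorem Beats.irrefl (b : Fin n → ℝ) (i : Fin n) : ¬ Beats b i i := by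
  rintro (h | ⟨_, h⟩) <;> exact lt_irrefl _ h

theorem Beats.trans {b : Fin n → ℝ} {k j i : Fin n} (h₁ : Beats b k j) (h₂ : Beats b j i) :
    Beats b k i := by
  rcases h₁ with h₁ | ⟨h₁, h₁'⟩ <;> rcases h₂ with h₂ | ⟨h₂, h₂'⟩
  · exact .inl (h₂.trans h₁)
  · exact .inl (h₂ ▸ h₁)
  · exact .inl (h₁ ▸ h₂)
  · exact .inr ⟨h₁.trans h₂, h₁'.trans h₂'⟩

theorem Beats.total (b : Fin n → ℝ) {i j : Fin n} (h : i ≠ j) : Beats b i j ∨ Beats b j i := by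
  rcases lt_trichotomy (b i) (b j) with hb | hb | hb
  · exact .inr (.inl hb)
  · rcases h.lt_or_gt with hij | hij
    · exact .inl (.inr ⟨hb, hij⟩)
    · exact .inr (.inr ⟨hb.symm, hij⟩)
  · exact .inl (.inl hb)

theorem rank_le_rank_of_beats_imp {b b' : Fin n → ℝ} {i : Fin n}
    (h : ∀ j ≠ i, Beats b' j i → Beats b j i) : rank b' i ≤ rank b i := by
  refine card_le_card fun j hj => ?_
  simp only [mem_filter, mem_univ, true_and] at hj ⊢
  exact h j (by rintro rfl; exact Beats.irrefl _ _ hj) hj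

theorem rank_lt_rank_of_beats {b : Fin n → ℝ} {j i : Fin n} (h : Beats b j i) :
    rank b j < rank b i := by
  simp only [rank_eq_card_beats]
  refine card_lt_card ⟨fun k hk => ?_, fun hsub => ?_⟩
  · simp only [mem_filter, mem_univ, true_and] at hk ⊢
    exact hk.trans h
  · exact Beats.irrefl b j (by simpa using hsub (by simpa using h))

theorem rank_lt (b : Fin n → ℝ) (i : Fin n) : rank b i < n := by
  calc rank b i < #(univ : Finset (Fin n)) :=
        card_lt_card ⟨filter_subset _ _, fun h => Beats.irrefl b i (by simpa using h (mem_univ i))⟩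
    _ = n := card_fin n

theorem rank_injective (b : Fin n → ℝ) : Injective (rank b) := by
  intro i j hij
  by_contra h
  rcases Beats.total b h with hb | hb
  · exact (rank_lt_rank_of_beats hb).ne hij
  · exact (rank_lt_rank_of_beats hb).ne' hij

theorem image_rank (b : Fin n → ℝ) : univ.image (rank b) = range n :=
  eq_of_subset_of_card_le (fun _ hk => by
      obtain ⟨i, -, rfl⟩ := mem_image.1 hk
      exact mem_range.2 (rank_lt b i))
    (by rw [card_image_of_injective _ (rank_injective b), card_range, card_fin])

theorem card_topAlloc {B : ℕ} (hBn : B ≤ n) (b : Fin n → ℝ) :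
    #{i | topAlloc B b i = true} = B := by
  have hrange : (range n).filter (· < B) = range B := by
    ext k; simp only [mem_filter, mem_range]; omega
  simp only [topAlloc, decide_eq_true_eq]
  rw [← card_image_of_injective _ (rank_injective b), ← filter_image (p := (· < B)), image_rank,
    hrange, card_range]

theorem le_of_topAlloc {B : ℕ} {b : Fin n → ℝ} {i j : Fin n} (hi : topAlloc B b i = true)
    (hj : topAlloc B b j = false) : b j ≤ b i := by
  simp only [topAlloc, decide_eq_true_eq, decide_eq_false_iff_not, not_lt] at hi hj
  by_contra! h
  exact absurd (rank_lt_rank_of_beats (.inl h : Beats b j i)) (by omega)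

end Ranking

theorem sum_le_sum_of_forall_notMem_le {ι : Type*} [DecidableEq ι] {g : ι → ℝ}
    (hg : ∀ i, 0 ≤ g i) {W T : Finset ι} (hcard : #T ≤ #W)
    (hW : ∀ i ∈ W, ∀ j ∉ W, g j ≤ g i) : ∑ i ∈ T, g i ≤ ∑ i ∈ W, g i := by
  rw [← sum_inter_add_sum_sdiff T W, ← sum_inter_add_sum_sdiff W T, inter_comm W T]
  refine add_le_add_right ?_ _
  have hcd : #(T \ W) ≤ #(W \ T) := card_sdiff_le_card_sdiff_iff.2 hcard
  rcases (T \ W).eq_empty_or_nonempty with h | h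
  · rw [h, sum_empty]
    exact sum_nonneg fun i _ => hg i
  obtain ⟨j₀, hj₀, hmax⟩ := exists_max_image (T \ W) g h
  calc ∑ i ∈ T \ W, g i ≤ #(T \ W) • g j₀ := sum_le_card_nsmul _ _ _ hmax
    _ ≤ #(W \ T) • g j₀ := nsmul_le_nsmul_left (hg j₀) hcd
    _ ≤ ∑ i ∈ W \ T, g i :=
      card_nsmul_le_sum _ _ _ fun i hi => hW i (mem_sdiff.1 hi).1 j₀ (mem_sdiff.1 hj₀).2

theorem sum_le_sum_topAlloc {n B : ℕ} (hBn : B ≤ n) (b : Fin n → ℝ) {g : Fin n → ℝ}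
    (hg : ∀ i, 0 ≤ g i) (hgb : ∀ i j, b j ≤ b i → g j ≤ g i) {T : Finset (Fin n)}
    (hT : #T ≤ B) : ∑ i ∈ T, g i ≤ ∑ i with topAlloc B b i = true, g i :=
  sum_le_sum_of_forall_notMem_le hg (by rwa [card_topAlloc hBn]) fun i hi j hj =>
    hgb i j (le_of_topAlloc (mem_filter.1 hi).2 (by simpa using hj))

section Accounting

variable {n m : ℕ}

theorem sum_append_sub_sum_natAdd (α : Fin (n + m) → Bool) (φ : ℝ → ℝ) (r : Fin n → ℝ)
    (f : Fin m → ℝ) :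
    (∑ i, if α i then φ (Fin.append r f i) else 0)
        - ∑ j, (if α (Fin.natAdd n j) then φ (f j) else 0)
      = ∑ i, if α (Fin.castAdd m i) then φ (r i) else 0 := by
  simp only [Fin.sum_univ_add, Fin.append_left, Fin.append_right, add_sub_cancel_right]

theorem card_filter_castAdd_le (α : Fin (n + m) → Bool) :
    #{i : Fin n | α (Fin.castAdd m i) = true} ≤ #{i | α i = true} :=
  card_le_card_of_injOn (Fin.castAdd m) (fun i hi => by simpa using hi)
    (Fin.castAdd_injective n m).injOn

end Accounting

section Miner

variable {n B : ℕ} {H : ℝ} {s : ℝ → ℝ}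

theorem shadingAuction_mmic (hBn : B ≤ n) (hs_mono : MonotoneOn s (Set.Icc 0 H))
    (hs_nonneg : ∀ v ∈ Set.Icc 0 H, 0 ≤ s v) {r : Fin n → ℝ} (hr : ∀ i, r i ∈ Set.Icc 0 H)
    {m : ℕ} (f : Fin m → ℝ) (α : Fin (n + m) → Bool) (hα : #{i | α i = true} ≤ B) :
    (∑ i, if α i then s (Fin.append r f i) else 0)
        - ∑ j, (if α (Fin.natAdd n j) then s (f j) else 0)
      ≤ ∑ i, if topAlloc B r i then s (r i) else 0 := by
  rw [sum_append_sub_sum_natAdd, ← sum_filter, ← sum_filter]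
  exact sum_le_sum_topAlloc hBn r (fun i => hs_nonneg _ (hr i))
    (fun i j h => hs_mono (hr j) (hr i) h) ((card_filter_castAdd_le α).trans hα)

theorem shadingAuction_ocaProof (hBn : B ≤ n) (hs_le : ∀ v ∈ Set.Icc 0 H, s v ≤ v)
    {v : Fin n → ℝ} (hv : ∀ i, v i ∈ Set.Icc 0 H) (S : Finset (Fin n)) {r : Fin n → ℝ}
    (hrS : ∀ i ∉ S, r i = v i) {m : ℕ} (f : Fin m → ℝ) (α : Fin (n + m) → Bool)
    (hα : #{i | α i = true} ≤ B) :
    ((∑ i, if α i then s (Fin.append r f i) else 0)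
          - ∑ j, (if α (Fin.natAdd n j) then s (f j) else 0))
        + ∑ i ∈ S, (v i * (if α (Fin.castAdd m i) then 1 else 0)
          - (if α (Fin.castAdd m i) then s (r i) else 0))
      ≤ (∑ i, if topAlloc B v i then s (v i) else 0)
        + ∑ i with topAlloc B v i = true, (v i - s (v i)) := by
  have hwelfare : (∑ i, if topAlloc B v i then s (v i) else 0)
      + ∑ i with topAlloc B v i = true, (v i - s (v i))
      = ∑ i with topAlloc B v i = true, v i := by
    rw [← sum_filter, ← sum_add_distrib]
    simp only [add_sub_cancel]
  have hterm : ∀ i, (if α (Fin.castAdd m i) then s (r i) else 0)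
      + (if i ∈ S then v i * (if α (Fin.castAdd m i) then 1 else 0)
          - (if α (Fin.castAdd m i) then s (r i) else 0) else 0)
      ≤ if α (Fin.castAdd m i) then v i else 0 := by
    intro i
    by_cases hαi : α (Fin.castAdd m i) <;> by_cases hS : i ∈ S <;> simp [hαi, hS]
    rw [hrS i hS]
    exact hs_le _ (hv i)
  rw [sum_append_sub_sum_natAdd, hwelfare, ← univ_inter S, ← sum_ite_mem, ← sum_add_distrib]
  calc _ ≤ ∑ i, if α (Fin.castAdd m i) then v i else 0 := sum_le_sum fun i _ => hterm i
    _ = ∑ i with α (Fin.castAdd m i) = true, v i := (sum_filter _ _).symm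
    _ ≤ _ := sum_le_sum_topAlloc hBn v (fun i => (hv i).1) (fun _ _ h => h)
        ((card_filter_castAdd_le α).trans hα)

end Miner

section WinSet

variable {n B : ℕ}

/-- The profiles against which bidder `i` is allocated when bidding `x`; the entry of the profile
at `i` itself is overwritten by `x`. -/
def winSet (B : ℕ) (i : Fin n) (x : ℝ) : Set (Fin n → ℝ) :=
  {b | topAlloc B (update b i x) i = true}

theorem mem_winSet_iff {b : Fin n → ℝ} {i : Fin n} {x : ℝ} :
    b ∈ winSet B i x ↔ rank (update b i x) i < B := by
  simp [winSet, topAlloc]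

theorem beats_update_self_iff {b : Fin n → ℝ} {i j : Fin n} (hj : j ≠ i) (x : ℝ) :
    Beats (update b i x) j i ↔ x < b j ∨ (b j = x ∧ j < i) := by
  simp only [Beats, update_self, update_of_ne hj]

theorem mem_winSet_of_imp {b b' : Fin n → ℝ} {i : Fin n} {x x' : ℝ} (hb' : b' ∈ winSet B i x')
    (h : ∀ j ≠ i, x < b j ∨ (b j = x ∧ j < i) → x' < b' j ∨ (b' j = x' ∧ j < i)) :
    b ∈ winSet B i x := by
  rw [mem_winSet_iff] at hb' ⊢
  refine lt_of_le_of_lt (rank_le_rank_of_beats_imp fun j hj hbj => ?_) hb'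
  rw [beats_update_self_iff hj] at hbj ⊢
  exact h j hj hbj

theorem winSet_mono (i : Fin n) : Monotone (winSet B i) := by
  intro x x' hxx' b hb
  refine mem_winSet_of_imp hb fun j _ h => ?_
  rcases h with h | ⟨h, hji⟩
  · exact .inl (hxx'.trans_lt h)
  · rcases hxx'.lt_or_eq with hlt | rfl
    · exact .inl (h ▸ hlt)
    · exact .inr ⟨h, hji⟩

theorem comp_mem_winSet_add {g : ℝ → ℝ} (hg : Monotone g) {ε : ℝ} (hε : 0 < ε)
    {b : Fin n → ℝ} {i : Fin n} {x : ℝ} (hb : b ∈ winSet B i x) :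
    (fun j => g (b j)) ∈ winSet B i (g x + ε) := by
  refine mem_winSet_of_imp hb fun j _ h => .inl (hg.reflect_lt ?_)
  rcases h with h | ⟨h, -⟩ <;> linarith

theorem mem_winSet_of_comp_mem {g : ℝ → ℝ} {b : Fin n → ℝ} {i : Fin n} {t : ℝ}
    (hb : ∀ j ≠ i, b j ≠ t ∧ (t < b j → g t < g (b j)))
    (h : (fun j => g (b j)) ∈ winSet B i (g t)) : b ∈ winSet B i t :=
  mem_winSet_of_imp h fun j hj hbj =>
    .inl ((hb j hj).2 (hbj.resolve_right fun h' => (hb j hj).1 h'.1))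

theorem mem_winSet_of_forall_lt (hB : 0 < B) {b : Fin n → ℝ} {i : Fin n} {x : ℝ}
    (hb : ∀ j ≠ i, b j < x) : b ∈ winSet B i x := by
  rw [mem_winSet_iff, rank_eq_card_beats]
  convert hB
  refine card_eq_zero.2 (filter_eq_empty_iff.2 fun j _ hj => ?_)
  rcases eq_or_ne j i with rfl | hji
  · exact Beats.irrefl _ _ hj
  · rw [beats_update_self_iff hji] at hj
    rcases hj with h | ⟨h, -⟩ <;> linarith [hb j hji]

theorem notMem_winSet_last {m : ℕ} (hBm : B ≤ m) {b : Fin (m + 1) → ℝ} {x : ℝ}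
    (hb : ∀ j ≠ Fin.last m, b j = x) : b ∉ winSet B (Fin.last m) x := by
  rw [mem_winSet_iff, rank_eq_card_beats, not_lt]
  calc B ≤ #(univ.erase (Fin.last m)) := by simpa using hBm
    _ ≤ _ := card_le_card fun j hj => by
      have hj := ne_of_mem_erase hj
      simp [beats_update_self_iff hj, hb j hj, Fin.lt_last_iff_ne_last.2 hj]

theorem measurable_rank (i : Fin n) : Measurable fun b : Fin n → ℝ => rank b i := by
  simp_rw [rank_eq_card_beats, card_filter]
  refine Finset.measurable_sum _ fun j _ => Measurable.ite ?_ measurable_const measurable_const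
  exact (measurableSet_lt (measurable_pi_apply i) (measurable_pi_apply j)).union
    ((measurableSet_eq_fun (measurable_pi_apply j) (measurable_pi_apply i)).inter
      (MeasurableSet.const _))

theorem measurableSet_winSet (B : ℕ) (i : Fin n) (x : ℝ) : MeasurableSet (winSet B i x) := by
  have : winSet B i x = (update · i x) ⁻¹' ((rank · i) ⁻¹' Set.Iio B) := by
    ext b; exact mem_winSet_iff
  rw [this]
  exact measurable_update_left (measurable_rank i (measurableSet_Iio))

end WinSet

section Expectations

variable {n B : ℕ}

theorem integral_shadeUtil (P : Measure (Fin n → ℝ)) (s : ℝ → ℝ) (i : Fin n) (x t : ℝ) :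
    ∫ v, shadeUtil s B (update v i x) i t ∂P = (t - s x) * P.real (winSet B i x) := by
  rw [mul_comm, ← smul_eq_mul, ← integral_indicator_const _ (measurableSet_winSet B i x)]
  congr 1 with v
  by_cases hv : v ∈ winSet B i x <;> simp_all [shadeUtil, winSet]

noncomputable def bidWinProb (μ : Measure ℝ) (B : ℕ) (g : ℝ → ℝ) (i : Fin n) (ρ : ℝ) : ℝ :=
  (iidPi μ n).real ((fun v j => g (v j)) ⁻¹' winSet B i ρ)

theorem integral_pabgaUtil {μ : Measure ℝ} {s g : ℝ → ℝ} (hg : Measurable g)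
    (hsg : ∀ᵐ v ∂iidPi μ n, ∀ j, s (v j) = g (v j)) (i : Fin n) (ρ t : ℝ) :
    ∫ v, pabgaUtil B (update (fun j => s (v j)) i ρ) i t ∂iidPi μ n
      = (t - ρ) * bidWinProb μ B g i ρ := by
  have hmeas : Measurable fun (v : Fin n → ℝ) j => g (v j) := by fun_prop
  rw [bidWinProb, mul_comm, ← smul_eq_mul,
    ← integral_indicator_const _ (hmeas (measurableSet_winSet B i ρ))]
  refine integral_congr_ae (hsg.mono fun v hv => ?_)
  dsimp only
  rw [show (fun j => s (v j)) = fun j => g (v j) from funext hv]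
  by_cases hw : (fun j => g (v j)) ∈ winSet B i ρ <;> simp_all [pabgaUtil, winSet]

end Expectations

section Equilibrium

variable {n B : ℕ} {μ : Measure ℝ} [IsProbabilityMeasure μ]

instance (μ : Measure ℝ) [IsProbabilityMeasure μ] (n : ℕ) :
    IsProbabilityMeasure (iidPi μ n) := by
  unfold iidPi; infer_instance

theorem ae_iidPi_forall_apply {p : ℝ → Prop} (h : ∀ᵐ y ∂μ, p y) :
    ∀ᵐ v ∂iidPi μ n, ∀ j, p (v j) :=
  ae_all_iff.2 fun _ => Measure.tendsto_eval_ae_ae.eventually h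

theorem bidWinProb_le_one (μ : Measure ℝ) [IsProbabilityMeasure μ] (B : ℕ) (g : ℝ → ℝ)
    (i : Fin n) (ρ : ℝ) : bidWinProb μ B g i ρ ≤ 1 :=
  measureReal_le_one

theorem sub_mul_le_of_forall_overbid {W : ℝ → ℝ} {t c a U : ℝ} (hW : ∀ ρ, W ρ ≤ 1)
    (hct : c ≤ t) (hU : ∀ ε > 0, (t - (c + ε)) * W (c + ε) ≤ U)
    (ha : ∀ ε > 0, a ≤ W (c + ε)) : (t - c) * a ≤ U := by
  refine le_of_forall_pos_le_add fun ε hε => ?_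
  calc (t - c) * a ≤ (t - c) * W (c + ε) := mul_le_mul_of_nonneg_left (ha ε hε) (by linarith)
    _ = (t - (c + ε)) * W (c + ε) + ε * W (c + ε) := by ring
    _ ≤ U + ε := add_le_add (hU ε hε) (mul_le_of_le_one_right hε.le (hW _))

/-- Overbidding `g x` by `ε` wins every tie at `g x`: a gain of order `μ (g ⁻¹' {g x})` at a cost
of order `ε`. The last bidder loses all ties, so it sees the whole gain. -/
theorem measure_preimage_singleton_eq_zero (hB : 0 < B) (hBn : B < n) {g : ℝ → ℝ}
    (hg : Measurable g) {x : ℝ} (hgx₀ : 0 ≤ g x) (hgx : g x < x)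
    (hbr : ∀ k : Fin n, ∀ ρ, 0 ≤ ρ →
      (x - ρ) * bidWinProb μ B g k ρ ≤ (x - g x) * bidWinProb μ B g k (g x)) :
    μ (g ⁻¹' {g x}) = 0 := by
  by_contra hL
  obtain ⟨m, rfl⟩ : ∃ m, n = m + 1 := ⟨n - 1, by omega⟩
  set c := g x
  set E : Set (Fin (m + 1) → ℝ) :=
    Set.univ.pi fun j => if j = Fin.last m then Set.univ else g ⁻¹' {c}
  have hE_meas : MeasurableSet E :=
    .univ_pi fun j => by split_ifs; exacts [.univ, hg (measurableSet_singleton c)]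
  have hE_pos : 0 < (iidPi μ (m + 1)).real E := by
    rw [measureReal_def, iidPi, Measure.pi_pi]
    refine ENNReal.toReal_pos (prod_ne_zero_iff.2 fun j _ => ?_)
      (ENNReal.prod_ne_top fun _ _ => measure_ne_top _ _)
    split_ifs <;> simp [hL]
  have hbids : ∀ v ∈ E, ∀ j ≠ Fin.last m, g (v j) = c := fun v hv j hj => by
    simpa [hj] using hv j (Set.mem_univ j)
  have hwin : ∀ ε > 0, bidWinProb μ B g (Fin.last m) c + (iidPi μ (m + 1)).real E
      ≤ bidWinProb μ B g (Fin.last m) (c + ε) := by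
    intro ε hε
    have hdisj : Disjoint ((fun v j => g (v j)) ⁻¹' winSet B (Fin.last m) c) E :=
      Set.disjoint_right.2 fun v hv => notMem_winSet_last (by omega) (hbids v hv)
    rw [bidWinProb, bidWinProb, ← measureReal_union hdisj hE_meas]
    refine measureReal_mono (Set.union_subset
      (Set.preimage_mono (winSet_mono _ (by linarith))) fun v hv => ?_)
    exact mem_winSet_of_forall_lt hB fun j hj => (hbids v hv j hj).trans_lt (by linarith)
  have := sub_mul_le_of_forall_overbid (bidWinProb_le_one μ B g _) hgx.le
    (fun ε hε => hbr _ _ (by positivity)) hwin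
  rw [mul_add] at this
  linarith [mul_pos (sub_pos.2 hgx) hE_pos]

theorem measure_tie_above_eq_zero (hB : 0 < B) (hBn : B < n) {H : ℝ}
    (hsupp : μ (Set.Icc 0 H) = 1) {g : ℝ → ℝ} (hg : Monotone g) {t : ℝ} (hgt₀ : 0 ≤ g t)
    (hgt : g t ≤ t)
    (hbr : ∀ k : Fin n, ∀ x ∈ Set.Icc 0 H, ∀ ρ, 0 ≤ ρ →
      (x - ρ) * bidWinProb μ B g k ρ ≤ (x - g x) * bidWinProb μ B g k (g x)) :
    μ {y | t < y ∧ g y = g t} = 0 := by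
  by_contra hA
  rw [← measure_inter_conull ((prob_compl_eq_zero_iff measurableSet_Icc).2 hsupp)] at hA
  obtain ⟨x, ⟨htx, hgx⟩, hx⟩ := nonempty_of_measure_ne_zero hA
  refine hA (measure_mono_null (fun y hy => hy.1.2.trans hgx.symm) ?_)
  exact measure_preimage_singleton_eq_zero hB hBn hg.measurable (hgx ▸ hgt₀)
    (hgx ▸ hgt.trans_lt htx) fun k => hbr k x hx

theorem bidWinProb_le_measureReal_winSet {g : ℝ → ℝ} (hg : Monotone g) {t : ℝ}
    (ht : μ {t} = 0) (htie : 0 < B → B < n → μ {y | t < y ∧ g y = g t} = 0) (i : Fin n) :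
    bidWinProb μ B g i (g t) ≤ (iidPi μ n).real (winSet B i t) := by
  refine ENNReal.toReal_mono (measure_ne_top _ _) (measure_mono_ae ?_)
  rcases Nat.eq_zero_or_pos B with rfl | hB
  · exact .of_forall fun v hv => absurd (mem_winSet_iff.1 hv) (Nat.not_lt_zero _)
  rcases le_or_gt n B with hnB | hBn
  · exact .of_forall fun v _ => mem_winSet_iff.2 ((rank_lt _ i).trans_le hnB)
  have hgood : ∀ᵐ y ∂μ, y ≠ t ∧ ¬(t < y ∧ g y = g t) :=
    (measure_eq_zero_iff_ae_notMem.1 ht).and (measure_eq_zero_iff_ae_notMem.1 (htie hB hBn))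
  filter_upwards [ae_iidPi_forall_apply hgood] with v hv
  exact mem_winSet_of_comp_mem fun j _ =>
    ⟨(hv j).1, fun htj => (hg htj.le).lt_of_ne fun h => (hv j).2 ⟨htj, h.symm⟩⟩

end Equilibrium

theorem shadingAuction_bic {n B : ℕ} {μ : Measure ℝ} [IsProbabilityMeasure μ]
    (hcont : ∀ x : ℝ, μ {x} = 0) {H : ℝ} (hsupp : μ (Set.Icc 0 H) = 1) {s : ℝ → ℝ}
    (hs_mono : MonotoneOn s (Set.Icc 0 H)) (hs_bounds : ∀ v ∈ Set.Icc 0 H, 0 ≤ s v ∧ s v ≤ v)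
    (hBNE : ∀ (i : Fin n) (t : ℝ), t ∈ Set.Icc 0 H → ∀ r : ℝ, 0 ≤ r →
      (∫ v, pabgaUtil B (update (fun j => s (v j)) i r) i t ∂iidPi μ n)
        ≤ ∫ v, pabgaUtil B (update (fun j => s (v j)) i (s t)) i t ∂iidPi μ n)
    (i : Fin n) {t : ℝ} (ht : t ∈ Set.Icc 0 H) {r : ℝ} (hr : r ∈ Set.Icc 0 H) :
    ∫ v, shadeUtil s B (update v i r) i t ∂iidPi μ n
      ≤ ∫ v, shadeUtil s B (update v i t) i t ∂iidPi μ n := by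
  obtain ⟨g, hg, hsg⟩ := hs_mono.exists_monotone_extension
    ⟨0, by rintro _ ⟨v, hv, rfl⟩; exact (hs_bounds v hv).1⟩
    ⟨H, by rintro _ ⟨v, hv, rfl⟩; exact (hs_bounds v hv).2.trans hv.2⟩
  have hbr : ∀ k : Fin n, ∀ x ∈ Set.Icc 0 H, ∀ ρ, 0 ≤ ρ →
      (x - ρ) * bidWinProb μ B g k ρ ≤ (x - g x) * bidWinProb μ B g k (g x) := by
    have hae := ae_iidPi_forall_apply (n := n)
      ((ae_iff.2 ((prob_compl_eq_zero_iff measurableSet_Icc).2 hsupp)).mono fun _ hy => hsg hy)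
    intro k x hx ρ hρ
    simpa only [integral_pabgaUtil hg.measurable hae, hsg hx] using hBNE k x hx ρ hρ
  have hgt : g t ≤ t := hsg ht ▸ (hs_bounds t ht).2
  have hbid : bidWinProb μ B g i (g t) ≤ (iidPi μ n).real (winSet B i t) :=
    bidWinProb_le_measureReal_winSet hg (hcont t) (fun hB hBn =>
      measure_tie_above_eq_zero hB hBn hsupp hg (hsg ht ▸ (hs_bounds t ht).1) hgt hbr) i
  rw [integral_shadeUtil, integral_shadeUtil, hsg hr, hsg ht]
  rcases lt_or_ge t (g r) with hlt | hle
  · exact (mul_nonpos_of_nonpos_of_nonneg (by linarith) measureReal_nonneg).trans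
      (mul_nonneg (sub_nonneg.2 hgt) measureReal_nonneg)
  calc (t - g r) * (iidPi μ n).real (winSet B i r)
      ≤ (t - g t) * bidWinProb μ B g i (g t) :=
        sub_mul_le_of_forall_overbid (bidWinProb_le_one μ B g i) hle
          (fun ε hε => hbr i t ht _ (by linarith [hsg hr ▸ (hs_bounds r hr).1]))
          fun ε hε => measureReal_mono fun v hv => comp_mem_winSet_add hg hε hv
    _ ≤ (t - g t) * (iidPi μ n).real (winSet B i t) :=
        mul_le_mul_of_nonneg_left hbid (sub_nonneg.2 hgt)

theorem shading_auction_good_general (n B : ℕ) (hBn : B ≤ n) (H : ℝ)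
    (μ : Measure ℝ) [IsProbabilityMeasure μ]
    (hcont : ∀ x : ℝ, μ {x} = 0) (hsupp : μ (Set.Icc (0 : ℝ) H) = 1)
    (s : ℝ → ℝ) (hs_mono : MonotoneOn s (Set.Icc (0 : ℝ) H))
    (hs_bounds : ∀ v ∈ Set.Icc (0 : ℝ) H, 0 ≤ s v ∧ s v ≤ v)
    (hBNE : ∀ (i : Fin n) (t : ℝ), t ∈ Set.Icc (0 : ℝ) H → ∀ r : ℝ, 0 ≤ r →
      (∫ v, pabgaUtil B (Function.update (fun j => s (v j)) i r) i t ∂(iidPi μ n))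
        ≤ ∫ v, pabgaUtil B (Function.update (fun j => s (v j)) i (s t)) i t ∂(iidPi μ n)) :
    -- (1) BIC: truthful reporting is a Bayes–Nash equilibrium of the shading auction.
    (∀ (i : Fin n) (t : ℝ), t ∈ Set.Icc (0 : ℝ) H → ∀ r ∈ Set.Icc (0 : ℝ) H,
      (∫ v, shadeUtil s B (Function.update v i r) i t ∂(iidPi μ n))
        ≤ ∫ v, shadeUtil s B (Function.update v i t) i t ∂(iidPi μ n))
    ∧
    -- (2) MMIC: for any reports `r`, fake bids `f` and feasible allocation `α`, the
    -- miner's utility (payments collected minus the payments of its own fake bids) is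
    -- at most its utility under the intended allocation with no fake bids.
    (∀ (r : Fin n → ℝ), (∀ i, r i ∈ Set.Icc (0 : ℝ) H) →
      ∀ (m : ℕ) (f : Fin m → ℝ), (∀ j, f j ∈ Set.Icc (0 : ℝ) H) →
      ∀ α : Fin (n + m) → Bool,
        (Finset.univ.filter fun i => α i = true).card ≤ B →
        ((∑ i : Fin (n + m), if α i then s (Fin.append r f i) else 0)
          - ∑ j : Fin m, (if α (Fin.natAdd n j) then s (f j) else 0))
        ≤ ∑ i : Fin n, (if topAlloc B r i then s (r i) else 0))
    ∧
    -- (3) OCA-proofness: no deviating coalition `S` with reports `r` (others truthful),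
    -- fake bids `f` and feasible allocation `α` obtains, together with the miner, a
    -- joint utility exceeding that of the miner and the winners under truthful play.
    (∀ (v : Fin n → ℝ), (∀ i, v i ∈ Set.Icc (0 : ℝ) H) →
      ∀ (S : Finset (Fin n)) (r : Fin n → ℝ), (∀ i, r i ∈ Set.Icc (0 : ℝ) H) →
        (∀ i ∉ S, r i = v i) →
      ∀ (m : ℕ) (f : Fin m → ℝ), (∀ j, f j ∈ Set.Icc (0 : ℝ) H) →
      ∀ α : Fin (n + m) → Bool,
        (Finset.univ.filter fun i => α i = true).card ≤ B →
        (((∑ i : Fin (n + m), if α i then s (Fin.append r f i) else 0)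
            - ∑ j : Fin m, (if α (Fin.natAdd n j) then s (f j) else 0))
          + ∑ i ∈ S, (v i * (if α (Fin.castAdd m i) then 1 else 0)
              - (if α (Fin.castAdd m i) then s (r i) else 0)))
        ≤ (∑ i : Fin n, (if topAlloc B v i then s (v i) else 0))
          + ∑ i ∈ Finset.univ.filter (fun i : Fin n => topAlloc B v i = true),
              (v i - s (v i)))
    ∧
    -- (4) Efficiency: the shading auction always allocates a set of `B` bidders with
    -- the highest values.
    (∀ v : Fin n → ℝ,
      (Finset.univ.filter fun i : Fin n => topAlloc B v i = true).card = B ∧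
      ∀ i j : Fin n, topAlloc B v i = true → topAlloc B v j = false → v j ≤ v i) := by
  refine ⟨fun i t ht r hr => shadingAuction_bic hcont hsupp hs_mono hs_bounds hBNE i ht hr,
    fun r hr m f _ α hα =>
      shadingAuction_mmic hBn hs_mono (fun v hv => (hs_bounds v hv).1) hr f α hα,
    fun v hv S r _ hrS m f _ α hα =>
      shadingAuction_ocaProof hBn (fun v hv => (hs_bounds v hv).2) hv S hrS f α hα,
    fun v => ⟨card_topAlloc hBn v, fun _ _ => le_of_topAlloc⟩⟩

/-- Suppose the `n` bidders' values are i.i.d. from a continuous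
distribution `μ` supported on `[0, H]`, and `s` is a non-decreasing function with
`0 ≤ s v ≤ v` that is a symmetric Bayes–Nash equilibrium bidding strategy of the
pay-as-bid greedy auction with block size `B`.  Then the shading auction (allocate the
`B` highest reports, charge each allocated bidder `i` the payment `s (vᵢ)`, burn
nothing) is BIC, MMIC, OCA-proof and efficient. -/
theorem shading_auction_good (n B : ℕ) (hBn : B ≤ n) (H : ℝ) (hH : 0 ≤ H)
    (μ : Measure ℝ) [IsProbabilityMeasure μ]
    (hcont : ∀ x : ℝ, μ {x} = 0) (hsupp : μ (Set.Icc (0 : ℝ) H) = 1)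
    (s : ℝ → ℝ) (hs_mono : MonotoneOn s (Set.Icc (0 : ℝ) H))
    (hs_bounds : ∀ v ∈ Set.Icc (0 : ℝ) H, 0 ≤ s v ∧ s v ≤ v)
    (hBNE : ∀ (i : Fin n) (t : ℝ), t ∈ Set.Icc (0 : ℝ) H → ∀ r : ℝ, 0 ≤ r →
      (∫ v, pabgaUtil B (Function.update (fun j => s (v j)) i r) i t ∂(iidPi μ n))
        ≤ ∫ v, pabgaUtil B (Function.update (fun j => s (v j)) i (s t)) i t ∂(iidPi μ n)) :
    -- (1) BIC: truthful reporting is a Bayes–Nash equilibrium of the shading auction.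
    (∀ (i : Fin n) (t : ℝ), t ∈ Set.Icc (0 : ℝ) H → ∀ r ∈ Set.Icc (0 : ℝ) H,
      (∫ v, shadeUtil s B (Function.update v i r) i t ∂(iidPi μ n))
        ≤ ∫ v, shadeUtil s B (Function.update v i t) i t ∂(iidPi μ n))
    ∧
    -- (2) MMIC: for any reports `r`, fake bids `f` and feasible allocation `α`, the
    -- miner's utility (payments collected minus the payments of its own fake bids) is
    -- at most its utility under the intended allocation with no fake bids.
    (∀ (r : Fin n → ℝ), (∀ i, r i ∈ Set.Icc (0 : ℝ) H) →
      ∀ (m : ℕ) (f : Fin m → ℝ), (∀ j, f j ∈ Set.Icc (0 : ℝ) H) →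
      ∀ α : Fin (n + m) → Bool,
        (Finset.univ.filter fun i => α i = true).card ≤ B →
        ((∑ i : Fin (n + m), if α i then s (Fin.append r f i) else 0)
          - ∑ j : Fin m, (if α (Fin.natAdd n j) then s (f j) else 0))
        ≤ ∑ i : Fin n, (if topAlloc B r i then s (r i) else 0))
    ∧
    -- (3) OCA-proofness: no deviating coalition `S` with reports `r` (others truthful),
    -- fake bids `f` and feasible allocation `α` obtains, together with the miner, a
    -- joint utility exceeding that of the miner and the winners under truthful play.
    (∀ (v : Fin n → ℝ), (∀ i, v i ∈ Set.Icc (0 : ℝ) H) →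
      ∀ (S : Finset (Fin n)) (r : Fin n → ℝ), (∀ i, r i ∈ Set.Icc (0 : ℝ) H) →
        (∀ i ∉ S, r i = v i) →
      ∀ (m : ℕ) (f : Fin m → ℝ), (∀ j, f j ∈ Set.Icc (0 : ℝ) H) →
      ∀ α : Fin (n + m) → Bool,
        (Finset.univ.filter fun i => α i = true).card ≤ B →
        (((∑ i : Fin (n + m), if α i then s (Fin.append r f i) else 0)
            - ∑ j : Fin m, (if α (Fin.natAdd n j) then s (f j) else 0))
          + ∑ i ∈ S, (v i * (if α (Fin.castAdd m i) then 1 else 0)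
              - (if α (Fin.castAdd m i) then s (r i) else 0)))
        ≤ (∑ i : Fin n, (if topAlloc B v i then s (v i) else 0))
          + ∑ i ∈ Finset.univ.filter (fun i : Fin n => topAlloc B v i = true),
              (v i - s (v i)))
    ∧
    -- (4) Efficiency: the shading auction always allocates a set of `B` bidders with
    -- the highest values.
    (∀ v : Fin n → ℝ,
      (Finset.univ.filter fun i : Fin n => topAlloc B v i = true).card = B ∧
      ∀ i j : Fin n, topAlloc B v i = true → topAlloc B v j = false → v j ≤ v i) :=
  shading_auction_good_general n B hBn H μ hcont hsupp s hs_mono hs_bounds hBNE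
end

section
/- Let M be a deterministic, OCA-proof, well-reserved transaction fee mechanism with block size B whose rules are defined for bid vectors of every finite length. Then there exists r ≥ 0 such that for every bid vector b, the intended allocation allocates exactly the min(B, |{i : b_i ≥ r}|) highest bids among those of value at least r, and the total burnt amount equals r times the number of allocated bids. -/
open MeasureTheory

/-- A transaction fee mechanism with block size `B` (possibly infinite), whose
allocation, payment and burning rules are defined for bid vectors of every finite length.
Bids are nonnegative reals; payments and burns are nonnegative. -/
structure TFM (B : ℕ∞) where
  alloc : ∀ n : ℕ, (Fin n → ℝ) → Fin n → Bool
  pay : ∀ n : ℕ, (Fin n → ℝ) → Fin n → ℝ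
  burn : ∀ n : ℕ, (Fin n → ℝ) → Fin n → ℝ
  pay_nonneg : ∀ n b i, 0 ≤ pay n b i
  burn_nonneg : ∀ n b i, 0 ≤ burn n b i
  alloc_card_le : ∀ n b,
    (((Finset.univ.filter fun i => alloc n b i = true).card : ℕ∞)) ≤ B

namespace TFM

variable {B : ℕ∞} (M : TFM B)

/-- Number of bids allocated by the intended allocation rule. -/
def allocCount (n : ℕ) (b : Fin n → ℝ) : ℕ :=
  (Finset.univ.filter fun i => M.alloc n b i = true).card

/-- Miner utility when the real bids are `b`, the miner injects fake bids `f`,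
and the mechanism's rules are applied to the full bid vector:
it collects all payments net of burn, but pays the fees of its own fake bids. -/
def minerUtil {n m : ℕ} (b : Fin n → ℝ) (f : Fin m → ℝ) : ℝ :=
  (∑ i : Fin (n + m),
      (M.pay (n + m) (Fin.append b f) i - M.burn (n + m) (Fin.append b f) i))
    - ∑ j : Fin m, M.pay (n + m) (Fin.append b f) (Fin.natAdd n j)

/-- Joint utility of the miner and the coalition `C` of (real) bidders with values `v`,
when the submitted real bids are `b`, the fake bids are `f`, and the miner chooses
the allocation `α` of the full bid vector. -/
def jointUtil {n m : ℕ} (C : Finset (Fin n)) (b : Fin n → ℝ) (f : Fin m → ℝ)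
    (α : Fin (n + m) → Bool) (v : Fin n → ℝ) : ℝ :=
  M.minerUtil b f
    + ∑ i ∈ C, (v i * (if α (Fin.castAdd m i) then 1 else 0)
        - M.pay (n + m) (Fin.append b f) (Fin.castAdd m i))

/-- Joint utility of the miner and the coalition `C` under truthful bidding,
no fake bids, and the intended allocation. -/
def truthfulJoint {n : ℕ} (C : Finset (Fin n)) (v : Fin n → ℝ) : ℝ :=
  (∑ i : Fin n, (M.pay n v i - M.burn n v i))
    + ∑ i ∈ C, (v i * (if M.alloc n v i then 1 else 0) - M.pay n v i)

/-- The set of bidders allocated under truthful bidding and the intended allocation. -/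
def winners (n : ℕ) (v : Fin n → ℝ) : Finset (Fin n) :=
  Finset.univ.filter fun i => M.alloc n v i = true

/-- OCA-proofness: no deviation (an arbitrary set `S` of deviating bidders, arbitrary
fake bids and an arbitrary feasible allocation chosen by the miner) gives the miner and
the deviating bidders a joint utility exceeding the joint utility of the miner together
with the bidders allocated under truthful bidding and the intended allocation. -/
def OCAProof : Prop :=
  ∀ (n : ℕ) (v : Fin n → ℝ), (∀ i, 0 ≤ v i) →
  ∀ (S : Finset (Fin n)) (b : Fin n → ℝ), (∀ i, 0 ≤ b i) → (∀ i ∉ S, b i = v i) →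
  ∀ (m : ℕ) (f : Fin m → ℝ), (∀ j, 0 ≤ f j) →
  ∀ α : Fin (n + m) → Bool,
    (((Finset.univ.filter fun i => α i = true).card : ℕ∞)) ≤ B →
    M.jointUtil S b f α v ≤ M.truthfulJoint (M.winners n v) v

end TFM

namespace TFM

variable {B : ℕ∞} (M : TFM B)

/-- Ex-post individual rationality: under the intended allocation, every unallocated
bidder pays `0`, and every allocated bidder pays at most its bid. -/
def EPIR : Prop :=
  ∀ (n : ℕ) (b : Fin n → ℝ), (∀ i, 0 ≤ b i) → ∀ i : Fin n,
    (M.alloc n b i = false → M.pay n b i = 0) ∧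
    (M.alloc n b i = true → M.pay n b i ≤ b i)

/-- Ex-post budget balance: the burn never exceeds the payment. -/
def EPBB : Prop :=
  ∀ (n : ℕ) (b : Fin n → ℝ), (∀ i, 0 ≤ b i) → ∀ i : Fin n, M.burn n b i ≤ M.pay n b i

/-- The mechanism is well-reserved with reserve price `r`: bids strictly below `r` are
never allocated, and no bid of at least `r` is unallocated while fewer than `B` bids are
allocated. -/
def WellReservedWith (r : ℝ) : Prop :=
  ∀ (n : ℕ) (b : Fin n → ℝ), (∀ i, 0 ≤ b i) → ∀ i : Fin n,
    (b i < r → M.alloc n b i = false) ∧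
    (r ≤ b i → M.alloc n b i = false → ¬ ((M.allocCount n b : ℕ∞) < B))

/-- A TFM is well-reserved if it is EPIR, EPBB and well-reserved with some reserve `r ≥ 0`. -/
def WellReserved : Prop :=
  M.EPIR ∧ M.EPBB ∧ ∃ r : ℝ, 0 ≤ r ∧ M.WellReservedWith r

end TFM

/-!
Take `r` to be the reserve price. The first two properties are the well-reservedness
conditions combined with the block-size bound. The other two come from coalitions of all
bidders with no fake bids: their joint utility with the miner is the value of the chosen
allocation minus the total burn, so OCA-proofness says that the intended allocation maximizes
`welfare - burn`. Swapping one allocated bid for an unallocated one shows that the highest bids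
win. Bidding `r` on every winning slot keeps the welfare fixed and makes the burn at most `r`
per winner, so the burn is at most `r · #winners`. If the winners instead value their slots at
some `t < r`, the truthful outcome is empty and costs nothing, so the burn is at least
`t · #winners`.
-/

namespace TFM

variable {B : ℕ∞} {M : TFM B}

theorem EPIR.sum_pay_eq_sum_winners (hEPIR : M.EPIR) {n : ℕ} {b : Fin n → ℝ}
    (hb : ∀ i, 0 ≤ b i) : ∑ i, M.pay n b i = ∑ i ∈ M.winners n b, M.pay n b i := by
  refine (Finset.sum_subset (Finset.subset_univ _) fun i _ hi => ?_).symm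
  exact (hEPIR n b hb i).1 (by simpa [winners] using hi)

theorem EPIR.truthfulJoint_winners (hEPIR : M.EPIR) {n : ℕ} {v : Fin n → ℝ}
    (hv : ∀ i, 0 ≤ v i) :
    M.truthfulJoint (M.winners n v) v = ∑ i ∈ M.winners n v, v i - ∑ i, M.burn n v i := by
  have hwin : ∀ i ∈ M.winners n v,
      v i * (if M.alloc n v i then 1 else 0) - M.pay n v i = v i - M.pay n v i := by
    intro i hi
    simp_all [winners]
  rw [truthfulJoint, Finset.sum_congr rfl hwin, Finset.sum_sub_distrib, Finset.sum_sub_distrib,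
    hEPIR.sum_pay_eq_sum_winners hv]
  ring

theorem EPIR.burn_le_bid (hEPIR : M.EPIR) (hEPBB : M.EPBB) {n : ℕ} {b : Fin n → ℝ}
    (hb : ∀ i, 0 ≤ b i) (i : Fin n) : M.burn n b i ≤ b i := by
  refine (hEPBB n b hb i).trans ?_
  cases halloc : M.alloc n b i
  · rw [(hEPIR n b hb i).1 halloc]
    exact hb i
  · exact (hEPIR n b hb i).2 halloc

/-- OCA-proofness against the coalition of all bidders, bidding `b` instead of their values `v`,
with no fake bids. -/
theorem OCAProof.sum_sub_sum_burn_le (hOCA : M.OCAProof) (hEPIR : M.EPIR) {n : ℕ}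
    {v b : Fin n → ℝ} (hv : ∀ i, 0 ≤ v i) (hb : ∀ i, 0 ≤ b i) {α : Fin n → Bool}
    (hα : ((Finset.univ.filter fun i => α i = true).card : ℕ∞) ≤ B) :
    ∑ i ∈ Finset.univ.filter (fun i => α i = true), v i - ∑ i, M.burn n b i
      ≤ ∑ i ∈ M.winners n v, v i - ∑ i, M.burn n v i := by
  have h := hOCA n v hv Finset.univ b hb (by simp) 0 Fin.elim0 (fun j => j.elim0) α hα
  rw [hEPIR.truthfulJoint_winners hv] at h
  convert h using 2
  simp [jointUtil, minerUtil, Finset.sum_filter, Fin.castAdd]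

theorem OCAProof.sum_filter_le_sum_winners (hOCA : M.OCAProof) (hEPIR : M.EPIR) {n : ℕ}
    {b : Fin n → ℝ} (hb : ∀ i, 0 ≤ b i) {α : Fin n → Bool}
    (hα : ((Finset.univ.filter fun i => α i = true).card : ℕ∞) ≤ B) :
    ∑ i ∈ Finset.univ.filter (fun i => α i = true), b i ≤ ∑ i ∈ M.winners n b, b i := by
  linarith [hOCA.sum_sub_sum_burn_le hEPIR hb hb hα]

theorem OCAProof.le_of_alloc_of_not_alloc (hOCA : M.OCAProof) (hEPIR : M.EPIR) {n : ℕ}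
    {b : Fin n → ℝ} (hb : ∀ i, 0 ≤ b i) {i j : Fin n} (hi : M.alloc n b i = true)
    (hj : M.alloc n b j = false) : b j ≤ b i := by
  set W := M.winners n b
  have hiW : i ∈ W := by simpa [W, winners] using hi
  have hjW : j ∉ W.erase i := by simp [W, winners, hj]
  let swapped := insert j (W.erase i)
  have hfilter : Finset.univ.filter (fun k => decide (k ∈ swapped) = true) = swapped := by
    ext k
    simp
  have hcard : swapped.card = M.allocCount n b := by
    rw [Finset.card_insert_of_notMem hjW, Finset.card_erase_add_one hiW]
    rfl
  have h := hOCA.sum_filter_le_sum_winners hEPIR hb (α := fun k => decide (k ∈ swapped))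
    (by rw [hfilter, hcard]; exact M.alloc_card_le n b)
  rw [hfilter, Finset.sum_insert hjW, Finset.sum_erase_eq_sub hiW] at h
  linarith

theorem OCAProof.sum_burn_le_sum_burn (hOCA : M.OCAProof) (hEPIR : M.EPIR) {n : ℕ}
    {b b' : Fin n → ℝ} (hb : ∀ i, 0 ≤ b i) (hb' : ∀ i, 0 ≤ b' i) :
    ∑ i, M.burn n b i ≤ ∑ i, M.burn n b' i := by
  have h := hOCA.sum_sub_sum_burn_le hEPIR hb hb' (α := M.alloc n b) (M.alloc_card_le n b)
  rw [← winners] at h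
  linarith

def winnersBidding (M : TFM B) (n : ℕ) (b : Fin n → ℝ) (t : ℝ) : Fin n → ℝ :=
  fun i => if M.alloc n b i then t else 0

theorem winnersBidding_nonneg {n : ℕ} {b : Fin n → ℝ} {t : ℝ} (ht : 0 ≤ t) (i : Fin n) :
    0 ≤ M.winnersBidding n b t i := by
  unfold winnersBidding
  split <;> simp [ht]

theorem sum_winners_winnersBidding (n : ℕ) (b : Fin n → ℝ) (t : ℝ) :
    ∑ i ∈ M.winners n b, M.winnersBidding n b t i = t * M.allocCount n b := by
  have hwin : ∀ i ∈ M.winners n b, M.winnersBidding n b t i = t := fun i hi =>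
    if_pos (Finset.mem_filter.1 hi).2
  rw [Finset.sum_congr rfl hwin, Finset.sum_const, nsmul_eq_mul, mul_comm]
  rfl

theorem winnersBidding_le {n : ℕ} {b : Fin n → ℝ} {t : ℝ} (ht : 0 ≤ t) (i : Fin n) :
    M.winnersBidding n b t i ≤ t := by
  unfold winnersBidding
  split <;> simp [ht]

theorem sum_winnersBidding (n : ℕ) (b : Fin n → ℝ) (t : ℝ) :
    ∑ i, M.winnersBidding n b t i = t * M.allocCount n b := by
  rw [← sum_winners_winnersBidding]
  refine (Finset.sum_subset (Finset.subset_univ _) fun i _ hi => ?_).symm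
  simp_all [winners, winnersBidding]

theorem OCAProof.sum_burn_le_mul_allocCount (hOCA : M.OCAProof) (hEPIR : M.EPIR)
    (hEPBB : M.EPBB) {r : ℝ} (hr : 0 ≤ r) {n : ℕ} {b : Fin n → ℝ} (hb : ∀ i, 0 ≤ b i) :
    ∑ i, M.burn n b i ≤ r * M.allocCount n b := by
  have hbids := winnersBidding_nonneg (M := M) (b := b) hr
  calc ∑ i, M.burn n b i ≤ ∑ i, M.burn n (M.winnersBidding n b r) i :=
        hOCA.sum_burn_le_sum_burn hEPIR hb hbids
    _ ≤ ∑ i, M.winnersBidding n b r i :=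
        Finset.sum_le_sum fun i _ => hEPIR.burn_le_bid hEPBB hbids i
    _ = r * M.allocCount n b := sum_winnersBidding n b r

theorem WellReservedWith.alloc_eq_false {r : ℝ} (hres : M.WellReservedWith r) {n : ℕ}
    {b : Fin n → ℝ} (hb : ∀ i, 0 ≤ b i) {i : Fin n} (hi : b i < r) : M.alloc n b i = false :=
  (hres n b hb i).1 hi

theorem WellReservedWith.le_of_alloc {r : ℝ} (hres : M.WellReservedWith r) {n : ℕ}
    {b : Fin n → ℝ} (hb : ∀ i, 0 ≤ b i) {i : Fin n} (hi : M.alloc n b i = true) : r ≤ b i := by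
  by_contra! hlt
  simp [hres.alloc_eq_false hb hlt] at hi

theorem WellReservedWith.allocCount_eq_min {r : ℝ} (hres : M.WellReservedWith r) {n : ℕ}
    {b : Fin n → ℝ} (hb : ∀ i, 0 ≤ b i) :
    (M.allocCount n b : ℕ∞) = min B (Finset.univ.filter fun i : Fin n => r ≤ b i).card := by
  have hsub : M.winners n b ⊆ Finset.univ.filter fun i => r ≤ b i := fun i hi => by
    simpa using hres.le_of_alloc hb (Finset.mem_filter.1 hi).2
  have hle : M.allocCount n b ≤ (Finset.univ.filter fun i => r ≤ b i).card :=
    Finset.card_le_card hsub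
  have hcap : (M.allocCount n b : ℕ∞) ≤ B := M.alloc_card_le n b
  rcases hcap.lt_or_eq with hlt | heq
  · have hsup : (Finset.univ.filter fun i => r ≤ b i) ⊆ M.winners n b := fun i hi => by
      by_contra hnot
      exact (hres n b hb i).2 (Finset.mem_filter.1 hi).2 (by simpa [winners] using hnot) hlt
    have hcount : M.allocCount n b = (Finset.univ.filter fun i => r ≤ b i).card :=
      hle.antisymm (Finset.card_le_card hsup)
    rw [hcount] at hlt ⊢
    exact (min_eq_right hlt.le).symm
  · rw [min_eq_left (heq ▸ by exact_mod_cast hle)]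
    exact heq

theorem OCAProof.mul_allocCount_le_sum_burn_of_lt (hOCA : M.OCAProof) (hEPIR : M.EPIR)
    (hEPBB : M.EPBB) {r : ℝ} (hres : M.WellReservedWith r) {n : ℕ} {b : Fin n → ℝ}
    (hb : ∀ i, 0 ≤ b i) {t : ℝ} (ht : 0 ≤ t) (htr : t < r) :
    t * M.allocCount n b ≤ ∑ i, M.burn n b i := by
  set v := M.winnersBidding n b t
  have hv : ∀ i, 0 ≤ v i := winnersBidding_nonneg ht
  have hv_lost : ∀ i, M.alloc n v i = false := fun i =>
    hres.alloc_eq_false hv ((winnersBidding_le ht i).trans_lt htr)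
  have hno_winners : M.winners n v = ∅ := Finset.filter_eq_empty_iff.2 fun i _ => by
    simp [hv_lost i]
  have hno_burn : ∑ i, M.burn n v i = 0 := Finset.sum_eq_zero fun i _ =>
    le_antisymm ((hEPBB n v hv i).trans_eq ((hEPIR n v hv i).1 (hv_lost i)))
      (M.burn_nonneg n v i)
  have h := hOCA.sum_sub_sum_burn_le hEPIR hv hb (α := M.alloc n b) (M.alloc_card_le n b)
  rw [hno_winners, hno_burn, ← winners, sum_winners_winnersBidding] at h
  simpa using h

theorem OCAProof.mul_allocCount_le_sum_burn (hOCA : M.OCAProof) (hEPIR : M.EPIR)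
    (hEPBB : M.EPBB) {r : ℝ} (hres : M.WellReservedWith r) {n : ℕ} {b : Fin n → ℝ}
    (hb : ∀ i, 0 ≤ b i) : r * M.allocCount n b ≤ ∑ i, M.burn n b i := by
  have hburn : 0 ≤ ∑ i, M.burn n b i := Finset.sum_nonneg fun i _ => M.burn_nonneg n b i
  rcases (Nat.cast_nonneg (α := ℝ) (M.allocCount n b)).eq_or_lt with hzero | hpos
  · rwa [← hzero, mul_zero]
  refine le_of_forall_lt_imp_le_of_dense fun a ha => ?_
  rcases lt_or_ge a 0 with hneg | hnonneg
  · exact hneg.le.trans hburn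
  have := hOCA.mul_allocCount_le_sum_burn_of_lt hEPIR hEPBB hres hb
    (t := a / M.allocCount n b) (by positivity) ((div_lt_iff₀ hpos).2 ha)
  rwa [div_mul_cancel₀ _ hpos.ne'] at this

end TFM

/-- Every deterministic OCA-proof well-reserved TFM with block size `B`
allocates, for some `r ≥ 0`, exactly the `min(B, |{i : bᵢ ≥ r}|)` highest bids among those
of value at least `r`, and burns `r` for each allocated bid. -/
theorem oca_proof_well_reserved_characterization (B : ℕ∞) (M : TFM B)
    (hOCA : M.OCAProof) (hWR : M.WellReserved) :
    ∃ r : ℝ, 0 ≤ r ∧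
      ∀ (n : ℕ) (b : Fin n → ℝ), (∀ i, 0 ≤ b i) →
        (∀ i : Fin n, M.alloc n b i = true → r ≤ b i) ∧
        ((M.allocCount n b : ℕ∞)
          = min B (((Finset.univ.filter fun i : Fin n => r ≤ b i).card : ℕ∞))) ∧
        (∀ i j : Fin n, M.alloc n b i = true → M.alloc n b j = false → b j ≤ b i) ∧
        (∑ i : Fin n, M.burn n b i) = r * (M.allocCount n b : ℝ) := by
  obtain ⟨hEPIR, hEPBB, r, hr, hres⟩ := hWR
  refine ⟨r, hr, fun n b hb => ⟨fun i => hres.le_of_alloc hb, hres.allocCount_eq_min hb,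
    fun i j => hOCA.le_of_alloc_of_not_alloc hEPIR hb, ?_⟩⟩
  exact le_antisymm (hOCA.sum_burn_le_mul_allocCount hEPIR hEPBB hr hb)
    (hOCA.mul_allocCount_le_sum_burn hEPIR hEPBB hres hb)
end
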